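/- The maps Ψ₁ and Ψ₂ are mutually symmetric with respect to the line y = x: letting σ(x,y) = (y,x) denote the reflection, for every (x,y) ∈ ℝ² one has Ψ₂(σ(Ψ₁(x,y))) = σ(x,y); equivalently, σ ∘ Ψ₂ ∘ σ is the inverse map of Ψ₁. -/

import Mathlib

/-- The ultradiscrete QRT map `Ψ₁(x,y) = (x̄, ȳ)` with `x̄ = -x + |y|` and
`ȳ = -y + max(x̄, 0)`. -/
noncomputable def psi1 (p : ℝ × ℝ) : ℝ × ℝ :=
  (-p.1 + |p.2|, -p.2 + max (-p.1 + |p.2|) 0)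

/-- The ultradiscrete QRT map `Ψ₂(x,y) = (x̄, ȳ)` with `x̄ = -x + max(y, 0)` and
`ȳ = -y + |x̄|`. -/
noncomputable def psi2 (p : ℝ × ℝ) : ℝ × ℝ :=
  (-p.1 + max p.2 0, -p.2 + |(-p.1 + max p.2 0)|)

/-- The reflection `σ(x,y) = (y,x)` in the line `y = x`. -/
def refl' (p : ℝ × ℝ) : ℝ × ℝ := (p.2, p.1)

/-!
Both maps are composites of two involutions, `(x, y) ↦ (-x + f y, y)` followed by
`(x, y) ↦ (x, -y + g x)`. Undoing them in reverse order is the same kind of composite with the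
roles of the two coordinates, and hence of `f` and `g`, exchanged; for `Ψ₁` this is `σ Ψ₂ σ`.
-/

section NegAddMap

variable {α : Type*} [AddCommGroup α]

def negAddMap (f g : α → α) (p : α × α) : α × α :=
  (-p.1 + f p.2, -p.2 + g (-p.1 + f p.2))

theorem negAddMap_swap_negAddMap (f g : α → α) (p : α × α) :
    negAddMap g f (negAddMap f g p).swap = p.swap := by
  obtain ⟨x, y⟩ := p
  have hy : -(-y + g (-x + f y)) + g (-x + f y) = y := by abel
  simp only [negAddMap, Prod.swap_prod_mk, hy]
  congr 1
  abel

end NegAddMap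

theorem psi1_eq_negAddMap : psi1 = negAddMap (|·|) (max · 0) := rfl

theorem psi2_eq_negAddMap : psi2 = negAddMap (max · 0) (|·|) := rfl

theorem refl'_eq_swap : refl' = Prod.swap := rfl

theorem psi2_symmetric_psi1 :
    (∀ p : ℝ × ℝ, psi2 (refl' (psi1 p)) = refl' p) ∧
    Function.LeftInverse (refl' ∘ psi2 ∘ refl') psi1 ∧
    Function.RightInverse (refl' ∘ psi2 ∘ refl') psi1 := by
  simp only [psi1_eq_negAddMap, psi2_eq_negAddMap, refl'_eq_swap]
  refine ⟨negAddMap_swap_negAddMap _ _, fun p => ?_, fun p => ?_⟩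
  · rw [Function.comp_apply, Function.comp_apply, negAddMap_swap_negAddMap, Prod.swap_swap]
  · rw [Function.comp_apply, Function.comp_apply, negAddMap_swap_negAddMap, Prod.swap_swap]
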